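/- Let p be an odd prime, χ the Legendre symbol, and S ⊆ F_p nonempty with 4·|S|² ≤ p (so |S| ≤ √p / 2). If b is chosen uniformly at random from F_p, then the probability that |{x ∈ S : χ(x+b) = -1}| is odd is at least 1/2 - (|S|-1)/(2√p) - |S|/p ≥ 1/2 - 1/4 - 1/(2√p) ≥ 1/5 for p ≥ 100. -/

import Mathlib

open Classical in
noncomputable def legChar (p : ℕ) (a : ZMod p) : ℤ :=
  if a = 0 then 0 else if IsSquare a then 1 else -1

/-!
For `b ∉ -S` every factor of `∏ x ∈ S, (x + b)` is nonzero, so by multiplicativity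
`χ(∏ x ∈ S, (x + b)) = (-1) ^ N(b)`, where `N(b)` counts the `x ∈ S` with `χ(x + b) = -1`;
for the at most `|S|` values `b ∈ -S` it is `0`. Hence the character sum equals
`#{b ∉ -S} - 2 · #{b ∉ -S : N(b) odd} ≥ p - |S| - 2 · #{b : N(b) odd}`, and the Weil bound
turns this into `2 · #{b : N(b) odd} ≥ p - |S| - (|S| - 1)√p`. The constant `1/5` is then
elementary arithmetic from `2|S| ≤ √p` and `√p ≥ 10`.
-/

open Finset Pointwise

theorem legChar_eq_quadraticChar (p : ℕ) [Fact p.Prime] (a : ZMod p) :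
    legChar p a = quadraticChar (ZMod p) a := by
  rw [quadraticChar_apply, quadraticCharFun, legChar]
  congr

theorem Finset.prod_eq_neg_one_pow_card_filter {ι R : Type*} [CommMonoid R] [HasDistribNeg R]
    [DecidableEq R] (s : Finset ι) (f : ι → R) (hf : ∀ i ∈ s, f i = 1 ∨ f i = -1) :
    ∏ i ∈ s, f i = (-1) ^ #{i ∈ s | f i = -1} := by
  calc ∏ i ∈ s, f i = ∏ i ∈ s, if f i = -1 then -1 else 1 :=
        prod_congr rfl fun i hi => by rcases hf i hi with h | h <;> simp [h]
    _ = (-1) ^ #{i ∈ s | f i = -1} := by rw [prod_ite, prod_const, prod_const_one, mul_one]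

theorem Finset.sum_neg_one_pow {ι : Type*} (s : Finset ι) (n : ι → ℕ) :
    ∑ i ∈ s, (-1 : ℤ) ^ n i = #s - 2 * #{i ∈ s | Odd (n i)} := by
  calc ∑ i ∈ s, (-1 : ℤ) ^ n i = ∑ i ∈ s, (1 - 2 * if Odd (n i) then 1 else 0) :=
        sum_congr rfl fun i _ => by
          rcases Nat.even_or_odd (n i) with h | h
          · simp [h.neg_one_pow, Nat.not_odd_iff_even.2 h]
          · simp [h.neg_one_pow, h]
    _ = #s - 2 * #{i ∈ s | Odd (n i)} := by
        rw [sum_sub_distrib, ← mul_sum, sum_boole]; simp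

section QuadraticChar

variable {F : Type*} [Field F] [Fintype F] [DecidableEq F]

def nonresidueCount (S : Finset F) (b : F) : ℕ := #{x ∈ S | quadraticChar F (x + b) = -1}

theorem quadraticChar_prod_add_of_notMem_neg {S : Finset F} {b : F} (hb : b ∉ -S) :
    quadraticChar F (∏ x ∈ S, (x + b)) = (-1) ^ nonresidueCount S b := by
  rw [map_prod, nonresidueCount]
  refine prod_eq_neg_one_pow_card_filter _ _ fun x hx => quadraticChar_dichotomy fun h => hb ?_
  rwa [mem_neg', ← eq_neg_of_add_eq_zero_left h]

theorem quadraticChar_prod_add_of_mem_neg {S : Finset F} {b : F} (hb : b ∈ -S) :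
    quadraticChar F (∏ x ∈ S, (x + b)) = 0 := by
  rw [mem_neg'] at hb
  rw [prod_eq_zero hb (neg_add_cancel b), quadraticChar_zero]

theorem le_sum_quadraticChar_prod_add (S : Finset F) :
    (Fintype.card F : ℤ) - #S - 2 * #{b | Odd (nonresidueCount S b)} ≤
      ∑ b, quadraticChar F (∏ x ∈ S, (x + b)) := by
  have hsum : ∑ b, quadraticChar F (∏ x ∈ S, (x + b)) =
      #(-S)ᶜ - 2 * #{b ∈ (-S)ᶜ | Odd (nonresidueCount S b)} := by
    rw [← sum_add_sum_compl (-S), sum_eq_zero fun b => quadraticChar_prod_add_of_mem_neg,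
      zero_add, ← sum_neg_one_pow]
    exact sum_congr rfl fun b hb => quadraticChar_prod_add_of_notMem_neg (mem_compl.1 hb)
  have hcompl : (#(-S)ᶜ : ℤ) = Fintype.card F - #S := by
    rw [card_compl, card_neg, Nat.cast_sub (card_le_univ S)]
  have hodd : #{b ∈ (-S)ᶜ | Odd (nonresidueCount S b)} ≤ #{b | Odd (nonresidueCount S b)} :=
    card_le_card (filter_subset_filter _ (subset_univ _))
  rw [hsum, hcompl]
  omega

end QuadraticChar

theorem half_sub_le_div_of_le_two_mul {q s m : ℝ} (hq : 0 < q)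
    (h : q - 2 * s - (s - 1) * √q ≤ 2 * m) : 1 / 2 - (s - 1) / (2 * √q) - s / q ≤ m / q := by
  calc 1 / 2 - (s - 1) / (2 * √q) - s / q = (q - 2 * s - (s - 1) * √q) / (2 * q) := by
        field_simp
        linear_combination (s - 1) * Real.mul_self_sqrt hq.le
    _ ≤ 2 * m / (2 * q) := by gcongr
    _ = m / q := mul_div_mul_left m q two_ne_zero

theorem one_fifth_le_half_sub {q s : ℝ} (hsq : 4 * s ^ 2 ≤ q) (hq : 100 ≤ q) :
    1 / 5 ≤ 1 / 2 - (s - 1) / (2 * √q) - s / q := by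
  have hsqrt : √q * √q = q := Real.mul_self_sqrt (by linarith)
  have h10 : 10 ≤ √q := Real.le_sqrt_of_sq_le (by linarith)
  have h2s : 2 * s ≤ √q := Real.le_sqrt_of_sq_le (by linarith)
  have h1 : (s - 1) / (2 * √q) ≤ 1 / 4 := by rw [div_le_iff₀ (by positivity)]; linarith
  have h2 : s / q ≤ 1 / 20 := by rw [div_le_iff₀ (by positivity), ← hsqrt]; nlinarith
  linarith

open Classical in
theorem parity_probability_one_fifth_general (p : ℕ)
    [Fact p.Prime] (S : Finset (ZMod p))
    (hsmall : 4 * S.card ^ 2 ≤ p) (hp100 : 100 ≤ p)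
    (hWeil : |(∑ b : ZMod p, legChar p (∏ x ∈ S, (x + b)) : ℝ)| ≤
      ((S.card : ℝ) - 1) * Real.sqrt p) :
    ((Finset.univ.filter fun b : ZMod p =>
        Odd (S.filter fun x => legChar p (x + b) = -1).card).card : ℝ) / p ≥
      1 / 2 - ((S.card : ℝ) - 1) / (2 * Real.sqrt p) - (S.card : ℝ) / p ∧
    ((Finset.univ.filter fun b : ZMod p =>
        Odd (S.filter fun x => legChar p (x + b) = -1).card).card : ℝ) / p ≥
      1 / 5 := by
  simp only [legChar_eq_quadraticChar] at hWeil ⊢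
  have hlow : (p : ℝ) - 2 * #S - (#S - 1) * √p ≤ 2 * #{b | Odd (nonresidueCount S b)} := by
    have hsum := le_sum_quadraticChar_prod_add S
    rw [ZMod.card] at hsum
    have hsumR := (Int.cast_le (R := ℝ)).2 hsum
    push_cast at hsumR
    linarith [(abs_le.1 hWeil).2, Nat.cast_nonneg (α := ℝ) #S]
  have hprob := half_sub_le_div_of_le_two_mul (by exact_mod_cast (Fact.out : p.Prime).pos) hlow
  refine ⟨hprob, le_trans ?_ hprob⟩
  exact one_fifth_le_half_sub (by exact_mod_cast hsmall) (by exact_mod_cast hp100)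

open Classical in
theorem parity_probability_one_fifth (p : ℕ) (hp : p.Prime) (hodd : p ≠ 2)
    [Fact p.Prime] (S : Finset (ZMod p)) (hS : S.Nonempty)
    (hsmall : 4 * S.card ^ 2 ≤ p) (hp100 : 100 ≤ p)
    (hWeil : |(∑ b : ZMod p, legChar p (∏ x ∈ S, (x + b)) : ℝ)| ≤
      ((S.card : ℝ) - 1) * Real.sqrt p) :
    ((Finset.univ.filter fun b : ZMod p =>
        Odd (S.filter fun x => legChar p (x + b) = -1).card).card : ℝ) / p ≥
      1 / 2 - ((S.card : ℝ) - 1) / (2 * Real.sqrt p) - (S.card : ℝ) / p ∧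
    ((Finset.univ.filter fun b : ZMod p =>
        Odd (S.filter fun x => legChar p (x + b) = -1).card).card : ℝ) / p ≥
      1 / 5 :=
  parity_probability_one_fifth_general p S hsmall hp100 hWeil
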